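/- arXiv:2308.11967 — 3 statements merged into one kernel-verified Lean document; each statement's English description precedes it below -/
import Mathlib

section
/- In Cat, a functor F : 𝒞 → 𝒟 has the right lifting property with respect to 0 → 1, 2 → 𝟚, and the parallel-pair collapse ℙ → 𝟚 if and only if F is fully faithful and surjective on objects. -/
open CategoryTheory CategoryTheory.Limits

namespace CatWfs

/-- The inclusion `0 → 1` of the empty category into the terminal category. -/
def emptyToPt : Cat.of (Discrete PEmpty) ⟶ Cat.of (Discrete PUnit) :=
  (Functor.empty (Discrete PUnit)).toCatHom

/-- The inclusion `2 → 𝟚` of the discrete two-object category into the interval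
category (`Bool` with its usual order `false < true`). -/
noncomputable def twoToInterval : Cat.of (Discrete Bool) ⟶ Cat.of Bool :=
  (Discrete.functor (fun b => b)).toCatHom

/-- The functor `2 → 1` collapsing the discrete two-object category. -/
def twoToPt : Cat.of (Discrete Bool) ⟶ Cat.of (Discrete PUnit) :=
  (Functor.star (Discrete Bool)).toCatHom

/-- The functor `ℙ → 𝟚` from the parallel-pair category to the interval category
sending both nonidentity arrows to the unique nonidentity arrow. -/
noncomputable def parallelPairToInterval : Cat.of WalkingParallelPair ⟶ Cat.of Bool :=
  (show WalkingParallelPair ⥤ Bool from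
    parallelPair (homOfLE (by decide : (false : Bool) ≤ true))
      (homOfLE (by decide : (false : Bool) ≤ true))).toCatHom

end CatWfs

open CatWfs

/-!
A commutative square in `Cat` from `i : A ⥤ B` to `F` is a pair of functors `u`, `v` with
`u ⋙ F = i ⋙ v`. Functors out of `0`, `2`, `𝟚` and `ℙ` are nothing, pairs of objects,
arrows and parallel pairs of arrows. So lifting against `0 → 1` lifts an object of `D` along
`F`, lifting against `2 → 𝟚` lifts an arrow between images of given objects (fullness), and
lifting against `ℙ → 𝟚` forces parallel arrows with the same image to coincide (faithfulness).
-/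

universe v u

namespace CategoryTheory.Cat

theorem hasLiftingProperty_iff {A B C D : Type u} [Category.{v} A] [Category.{v} B]
    [Category.{v} C] [Category.{v} D] (i : Cat.of A ⟶ Cat.of B) (F : C ⥤ D) :
    HasLiftingProperty i F.toCatHom ↔
      ∀ (u : A ⥤ C) (v : B ⥤ D), u ⋙ F = i.toFunctor ⋙ v →
        ∃ L : B ⥤ C, i.toFunctor ⋙ L = u ∧ L ⋙ F = v := by
  constructor
  · intro h u v w
    obtain ⟨⟨L, hL, hLF⟩⟩ :=
      (h.sq_hasLift (f := u.toCatHom) (g := v.toCatHom) ⟨Cat.Hom.ext w⟩).exists_lift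
    exact ⟨L.toFunctor, congrArg Cat.Hom.toFunctor hL, congrArg Cat.Hom.toFunctor hLF⟩
  · refine fun h => ⟨fun {u v} sq => ?_⟩
    obtain ⟨L, hL, hLF⟩ := h u.toFunctor v.toFunctor (congrArg Cat.Hom.toFunctor sq.w)
    exact ⟨⟨⟨L.toCatHom, Cat.Hom.ext hL, Cat.Hom.ext hLF⟩⟩⟩

end CategoryTheory.Cat

namespace CatWfs

def intervalHom : (false : Bool) ⟶ true := homOfLE (by decide)

section Interval

variable {C : Type u} [Category.{v} C]

def intervalFunctor {X Y : C} (m : X ⟶ Y) : Bool ⥤ C where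
  obj b := bif b then Y else X
  map {b b'} f :=
    match b, b', f with
    | false, false, _ => 𝟙 X
    | false, true, _ => m
    | true, true, _ => 𝟙 Y
    | true, false, f => absurd f.down.down (by decide)
  map_id b := by cases b <;> rfl
  map_comp {b b' b''} f g := by
    cases b <;> cases b' <;> cases b'' <;>
      first
        | exact absurd f.down.down (by decide)
        | exact absurd g.down.down (by decide)
        | simp

theorem Bool.functor_hext {G H : Bool ⥤ C} (h₀ : G.obj false = H.obj false)
    (h₁ : G.obj true = H.obj true) (hm : G.map intervalHom ≍ H.map intervalHom) : G = H := by
  refine Functor.hext (by rintro (_ | _) <;> assumption) ?_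
  rintro (_ | _) (_ | _) f
  · rw [Subsingleton.elim f (𝟙 _), G.map_id, H.map_id, h₀]
  · rwa [Subsingleton.elim f intervalHom]
  · exact absurd f.down.down (by decide)
  · rw [Subsingleton.elim f (𝟙 _), G.map_id, H.map_id, h₁]

theorem exists_eq_intervalFunctor (G : Bool ⥤ C) :
    ∃ (X Y : C) (m : X ⟶ Y), G = intervalFunctor m :=
  ⟨_, _, G.map intervalHom, Bool.functor_hext rfl rfl HEq.rfl⟩

theorem intervalFunctor_comp {D : Type*} [Category D] {X Y : C} (m : X ⟶ Y) (F : C ⥤ D) :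
    intervalFunctor m ⋙ F = intervalFunctor (F.map m) :=
  Bool.functor_hext rfl rfl HEq.rfl

end Interval

section ParallelPair

variable {C : Type u} [Category.{v} C]

theorem exists_eq_parallelPair (G : WalkingParallelPair ⥤ C) :
    ∃ (X Y : C) (f g : X ⟶ Y), G = parallelPair f g :=
  ⟨_, _, G.map .left, G.map .right,
    Functor.hext (by rintro (_ | _) <;> rfl) (by rintro _ _ (_ | _ | (_ | _)) <;> simp)⟩

theorem parallelPair_comp {D : Type*} [Category D] {X Y : C} (f g : X ⟶ Y) (F : C ⥤ D) :
    parallelPair f g ⋙ F = parallelPair (F.map f) (F.map g) :=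
  Functor.hext (by rintro (_ | _) <;> rfl) (by rintro _ _ (_ | _ | (_ | _)) <;> simp)

end ParallelPair

variable {C D : Type} [SmallCategory C] [SmallCategory D]

theorem twoToInterval_comp_intervalFunctor {X Y : C} (m : X ⟶ Y) :
    twoToInterval.toFunctor ⋙ intervalFunctor m =
      Discrete.functor (fun b => bif b then Y else X) :=
  Discrete.functor_ext fun b => by cases b <;> rfl

theorem parallelPairToInterval_comp_intervalFunctor {X Y : C} (m : X ⟶ Y) :
    parallelPairToInterval.toFunctor ⋙ intervalFunctor m = parallelPair m m :=
  Functor.hext (by rintro (_ | _) <;> rfl) (by rintro _ _ (_ | _ | (_ | _)) <;> rfl)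

theorem hasLiftingProperty_emptyToPt_iff (F : C ⥤ D) :
    HasLiftingProperty emptyToPt F.toCatHom ↔ Function.Surjective F.obj := by
  rw [Cat.hasLiftingProperty_iff]
  constructor
  · intro h d
    obtain ⟨L, -, hL⟩ := h (Functor.empty C) ((Functor.const _).obj d) (Functor.empty_ext' _ _)
    exact ⟨L.obj ⟨⟨⟩⟩, Functor.congr_obj hL _⟩
  · intro hF u v _
    obtain ⟨c, hc⟩ := hF (v.obj ⟨⟨⟩⟩)
    exact ⟨(Functor.const _).obj c, Functor.empty_ext' _ _, Discrete.functor_ext fun _ => hc⟩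

theorem hasLiftingProperty_twoToInterval_iff (F : C ⥤ D) :
    HasLiftingProperty twoToInterval F.toCatHom ↔ F.Full := by
  rw [Cat.hasLiftingProperty_iff]
  constructor
  · refine fun h => ⟨fun {X Y} ψ => ?_⟩
    have sq : (Discrete.functor fun b => bif b then Y else X) ⋙ F =
        twoToInterval.toFunctor ⋙ intervalFunctor ψ := by
      rw [twoToInterval_comp_intervalFunctor]
      exact Discrete.functor_ext fun b => by cases b <;> rfl
    obtain ⟨L, hL, hLF⟩ := h _ _ sq
    obtain rfl : L.obj false = X := Functor.congr_obj hL ⟨false⟩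
    obtain rfl : L.obj true = Y := Functor.congr_obj hL ⟨true⟩
    exact ⟨L.map intervalHom, eq_of_heq (Functor.hcongr_hom hLF intervalHom)⟩
  · intro hF u v w
    obtain ⟨X', Y', m, rfl⟩ := exists_eq_intervalFunctor v
    rw [twoToInterval_comp_intervalFunctor] at w
    obtain rfl : F.obj (u.obj ⟨false⟩) = X' := Functor.congr_obj w ⟨false⟩
    obtain rfl : F.obj (u.obj ⟨true⟩) = Y' := Functor.congr_obj w ⟨true⟩
    refine ⟨intervalFunctor (F.preimage m), ?_, by rw [intervalFunctor_comp, F.map_preimage]⟩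
    rw [twoToInterval_comp_intervalFunctor]
    exact Discrete.functor_ext fun b => by cases b <;> rfl

theorem hasLiftingProperty_parallelPairToInterval_iff (F : C ⥤ D) :
    HasLiftingProperty parallelPairToInterval F.toCatHom ↔ F.Faithful := by
  rw [Cat.hasLiftingProperty_iff]
  constructor
  · refine fun h => ⟨fun {X Y} f g hfg => ?_⟩
    obtain ⟨L, hL, -⟩ := h (parallelPair f g) (intervalFunctor (F.map f))
      (by rw [parallelPairToInterval_comp_intervalFunctor, parallelPair_comp, hfg])
    have hf := Functor.hcongr_hom hL WalkingParallelPairHom.left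
    have hg := Functor.hcongr_hom hL WalkingParallelPairHom.right
    exact eq_of_heq (hf.symm.trans hg)
  · intro hF u v w
    obtain ⟨X, Y, f, g, rfl⟩ := exists_eq_parallelPair u
    obtain ⟨X', Y', m, rfl⟩ := exists_eq_intervalFunctor v
    rw [parallelPair_comp, parallelPairToInterval_comp_intervalFunctor] at w
    obtain rfl : F.obj X = X' := Functor.congr_obj w .zero
    obtain rfl : F.obj Y = Y' := Functor.congr_obj w .one
    have hf : F.map f = m := eq_of_heq (Functor.hcongr_hom w .left)
    have hg : F.map g = m := eq_of_heq (Functor.hcongr_hom w .right)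
    obtain rfl : f = g := F.map_injective (hf.trans hg.symm)
    exact ⟨intervalFunctor f, parallelPairToInterval_comp_intervalFunctor f,
      by rw [intervalFunctor_comp, hf]⟩

end CatWfs

/-- a functor between small categories has the right lifting property with
respect to `0 → 1`, `2 → 𝟚` and the parallel-pair collapse `ℙ → 𝟚` iff it is fully
faithful and surjective on objects. -/
theorem rlp_iff_fullyFaithful_and_surjOnObj
    {C D : Type} [SmallCategory C] [SmallCategory D] (F : C ⥤ D) :
    (HasLiftingProperty emptyToPt (show Cat.of C ⟶ Cat.of D from F.toCatHom) ∧
     HasLiftingProperty twoToInterval (show Cat.of C ⟶ Cat.of D from F.toCatHom) ∧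
     HasLiftingProperty parallelPairToInterval (show Cat.of C ⟶ Cat.of D from F.toCatHom)) ↔
    (F.Full ∧ F.Faithful ∧ Function.Surjective F.obj) := by
  refine .trans ?_ and_rotate
  exact and_congr (hasLiftingProperty_emptyToPt_iff F) <| and_congr
    (hasLiftingProperty_twoToInterval_iff F) (hasLiftingProperty_parallelPairToInterval_iff F)
end

section
/- Let 𝔛 be a locally finitely presentable category with a weak factorization system (ℰ, ℱ) cofibrantly generated by a set of arrows between compact objects, and suppose the full subcategory of compact ℰ-cofibrant objects (compact objects X with 0 → X in ℰ) is dense in 𝔛. Then every map in ℱ is a regular epimorphism. -/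
open CategoryTheory CategoryTheory.Limits Opposite

universe v u

namespace CompactArrows

variable {C : Type u} [Category.{v} C]

/-- The cocone on `D ⋙ Hom(X, -)` induced by a cocone on `D`. -/
def homCocone {J : Type v} [SmallCategory J] {D : J ⥤ C} (c : Cocone D) (X : C) :
    Cocone (D ⋙ coyoneda.obj (op X)) where
  pt := X ⟶ c.pt
  ι :=
    { app := fun j => TypeCat.ofHom (fun (g : X ⟶ D.obj j) => g ≫ c.ι.app j)
      naturality := by
        intro j j' t
        ext g
        simp }

/-- The canonical comparison map `colim_j Hom(X, D_j) ⟶ Hom(X, colim D)`,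
relative to a chosen (co)limiting cocone `c` on `D`. -/
noncomputable def canMap {J : Type v} [SmallCategory J] {D : J ⥤ C} (c : Cocone D) (X : C) :
    colimit (D ⋙ coyoneda.obj (op X)) ⟶ (X ⟶ c.pt) :=
  colimit.desc _ (homCocone c X)

/-- `X` is a compact object: `Hom(X, -)` preserves small filtered colimits. -/
def CompactObj (X : C) : Prop :=
  ∀ (J : Type v) (_ : SmallCategory J) (_ : IsFiltered J) (D : J ⥤ C) (c : Cocone D),
    IsColimit c → IsIso (canMap c X)

/-- `f : A ⟶ B` is a compact arrow: for every small filtered diagram `D` the comparison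
square between `colim_j Hom(B, D_j) → Hom(B, colim D)` and
`colim_j Hom(A, D_j) → Hom(A, colim D)` (via precomposition with `f`) is a pullback of sets. -/
def CompactArrow {A B : C} (f : A ⟶ B) : Prop :=
  ∀ (J : Type v) (_ : SmallCategory J) (_ : IsFiltered J) (D : J ⥤ C) (c : Cocone D),
    IsColimit c →
      IsPullback (canMap c B)
        (colimMap (Functor.whiskerLeft D (coyoneda.map f.op)))
        (TypeCat.ofHom (fun (g : B ⟶ c.pt) => f ≫ g))
        (canMap c A)

end CompactArrows

namespace CategoryTheory.Presheaf

/-- The restricted Yoneda functor `ℰ ⥤ Cᵒᵖ ⥤ Type v₁` of Mathlib (Dec 2024),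
`E ↦ (c ↦ (A.obj c ⟶ E))`, without universe lifting. -/
def restrictedYoneda.{v₁, u₁, u₂} {C : Type u₁} [Category.{v₁} C] {ℰ : Type u₂}
    [Category.{v₁} ℰ] (A : C ⥤ ℰ) : ℰ ⥤ Cᵒᵖ ⥤ Type v₁ :=
  yoneda ⋙ (Functor.whiskeringLeft _ _ (Type v₁)).obj (Functor.op A)

end CategoryTheory.Presheaf

open CompactArrows

/-!
Lifting against `0 ⟶ A` makes `f ∈ ℱ` surjective on `A`-points for every compact cofibrant `A`.
By density of these `A`, faithfulness of the nerve then makes `f` epi, and fullness lets every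
`q : X ⟶ W` that identifies the `A`-points identified by `f` descend along `f`. Compact objects
are essentially small, so one pair `u v : ∐ A ⟶ X` collects all these identifications, and `f`
is its coequalizer.
-/

universe w

variable {C : Type u} [Category.{v} C]

theorem exists_lift_of_hasLiftingProperty_initial [HasInitial C] {A X Y : C} (f : X ⟶ Y)
    [HasLiftingProperty (initial.to A) f] (g : A ⟶ Y) : ∃ h : A ⟶ X, h ≫ f = g :=
  let sq : CommSq (initial.to X) (initial.to A) f g := ⟨initial.hom_ext _ _⟩
  ⟨sq.lift, sq.fac_right⟩

theorem exists_le_isoClosure_ofObj (P : ObjectProperty C)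
    [EssentiallySmall.{w} P.FullSubcategory] :
    ∃ (ι : Type w) (G : ι → C), P ≤ (ObjectProperty.ofObj G).isoClosure :=
  let e := equivSmallModel.{w} P.FullSubcategory
  ⟨SmallModel.{w} P.FullSubcategory, fun s => (e.inverse.obj s).obj,
    fun A hA => ⟨_, ⟨e.functor.obj ⟨A, hA⟩⟩, ⟨P.ι.mapIso (e.unitIso.app ⟨A, hA⟩)⟩⟩⟩

def EqualizesKernelOn (P : ObjectProperty C) {X Y W : C} (f : X ⟶ Y) (q : X ⟶ W) : Prop :=
  ∀ ⦃A : C⦄, P A → ∀ h h' : A ⟶ X, h ≫ f = h' ≫ f → h ≫ q = h' ≫ q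

namespace EqualizesKernelOn

variable {P Q : ObjectProperty C} {X Y W : C} {f : X ⟶ Y} {q : X ⟶ W}

theorem mono (hPQ : P ≤ Q) (hq : EqualizesKernelOn Q f q) : EqualizesKernelOn P f q :=
  fun _ hA => hq (hPQ _ hA)

theorem isoClosure (hq : EqualizesKernelOn P f q) : EqualizesKernelOn P.isoClosure f q := by
  rintro A ⟨B, hB, ⟨e⟩⟩ h h' hh
  have := hq hB (e.inv ≫ h) (e.inv ≫ h') (by simp [hh])
  simpa using e.hom ≫= this

end EqualizesKernelOn

theorem exists_pair_equalizesKernelOn_ofObj [HasCoproducts.{v} C] {ι : Type v} (G : ι → C)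
    {X Y : C} (f : X ⟶ Y) :
    ∃ (Z : C) (u v : Z ⟶ X), u ≫ f = v ≫ f ∧
      ∀ ⦃W : C⦄ (q : X ⟶ W), u ≫ q = v ≫ q → EqualizesKernelOn (.ofObj G) f q := by
  let K := Σ i, {p : (G i ⟶ X) × (G i ⟶ X) // p.1 ≫ f = p.2 ≫ f}
  refine ⟨∐ fun k : K => G k.1, Sigma.desc fun k => k.2.1.1, Sigma.desc fun k => k.2.1.2,
    Sigma.hom_ext _ _ fun k => by simpa using k.2.2, fun W q hq => ?_⟩
  rintro _ ⟨i⟩ h h' hh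
  simpa using Sigma.ι (fun k : K => G k.1) ⟨i, (h, h'), hh⟩ ≫= hq

section Density

open Presheaf

variable (P : ObjectProperty C) {X Y : C} {f : X ⟶ Y}

theorem epi_of_restrictedYoneda_faithful [(restrictedYoneda P.ι).Faithful]
    (hf : ∀ ⦃A : C⦄, P A → ∀ g : A ⟶ Y, ∃ h : A ⟶ X, h ≫ f = g) : Epi f where
  left_cancellation a b hab := (restrictedYoneda P.ι).map_injective <| by
    ext A g
    change g ≫ a = g ≫ b
    obtain ⟨h, rfl⟩ := hf A.unop.2 g
    simp only [Category.assoc, hab]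

theorem exists_comp_eq_of_equalizesKernelOn [(restrictedYoneda P.ι).Full]
    [(restrictedYoneda P.ι).Faithful]
    (hf : ∀ ⦃A : C⦄, P A → ∀ g : A ⟶ Y, ∃ h : A ⟶ X, h ≫ f = g)
    {W : C} {q : X ⟶ W} (hq : EqualizesKernelOn P f q) : ∃ t : Y ⟶ W, f ≫ t = q := by
  choose lift hlift using hf
  let τ : (restrictedYoneda P.ι).obj Y ⟶ (restrictedYoneda P.ι).obj W :=
    { app A := TypeCat.ofHom fun g => lift A.unop.2 g ≫ q
      naturality A A' m := by
        ext (g : A.unop.obj ⟶ Y)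
        change lift _ (P.ι.map m.unop ≫ g) ≫ q = P.ι.map m.unop ≫ lift _ g ≫ q
        rw [← Category.assoc]
        exact hq A'.unop.2 _ _ (by simp [hlift]) }
  refine ⟨(restrictedYoneda P.ι).preimage τ, (restrictedYoneda P.ι).map_injective ?_⟩
  ext A (g : A.unop.obj ⟶ X)
  change g ≫ f ≫ (restrictedYoneda P.ι).preimage τ = g ≫ q
  rw [← Category.assoc]
  exact (congr_arg (fun φ => φ.app A (g ≫ f)) ((restrictedYoneda P.ι).map_preimage τ)).trans
    (hq A.unop.2 _ _ (hlift _ _))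

noncomputable def isColimitCoforkOfEqualizesKernelOn [(restrictedYoneda P.ι).Full]
    [(restrictedYoneda P.ι).Faithful]
    (hf : ∀ ⦃A : C⦄, P A → ∀ g : A ⟶ Y, ∃ h : A ⟶ X, h ≫ f = g)
    {Z : C} {u v : Z ⟶ X} (w : u ≫ f = v ≫ f)
    (huv : ∀ ⦃W : C⦄ (q : X ⟶ W), u ≫ q = v ≫ q → EqualizesKernelOn P f q) :
    IsColimit (Cofork.ofπ f w) :=
  have := epi_of_restrictedYoneda_faithful P hf
  Cofork.IsColimit.ofExistsUnique fun s =>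
    have ⟨t, ht⟩ := exists_comp_eq_of_equalizesKernelOn P hf (huv s.π s.condition)
    ⟨t, ht, fun _ hm => (cancel_epi f).1 (hm.trans ht.symm)⟩

end Density

theorem full_maps_are_regular_epis_general
    {L : Type u} [Category.{v} L] [HasColimits L]
    -- local finite presentability: the compact objects are essentially small and dense
    [EssentiallySmall.{v} (ObjectProperty.FullSubcategory (CompactObj (C := L)))]
    -- the weak factorization system (E, F)
    (E F : MorphismProperty L)
    (hlift : ∀ {A B X Y : L} (e : A ⟶ B) (f : X ⟶ Y), E e → F f → HasLiftingProperty e f)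
    -- density of the compact E-cofibrant objects (0-extensions)
    (hdense : (Presheaf.restrictedYoneda (ObjectProperty.ι
        (fun X : L => CompactObj X ∧ E (initial.to X)))).Full ∧
      (Presheaf.restrictedYoneda (ObjectProperty.ι
        (fun X : L => CompactObj X ∧ E (initial.to X)))).Faithful) :
    ∀ {X Y : L} (f : X ⟶ Y), F f → Nonempty (RegularEpi f) := by
  intro X Y f hf
  obtain ⟨_, _⟩ := hdense
  have hlifts : ∀ ⦃A : L⦄, CompactObj A ∧ E (initial.to A) → ∀ g : A ⟶ Y, ∃ h, h ≫ f = g :=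
    fun A hA g =>
      have := hlift _ f hA.2 hf
      exists_lift_of_hasLiftingProperty_initial f g
  obtain ⟨ι, G, hG⟩ := exists_le_isoClosure_ofObj.{v} (CompactObj (C := L))
  obtain ⟨Z, u, v, w, huv⟩ := exists_pair_equalizesKernelOn_ofObj G f
  exact ⟨⟨Z, u, v, w, isColimitCoforkOfEqualizesKernelOn _ hlifts w fun _ q hq =>
    (huv q hq).isoClosure.mono fun A hA => hG A hA.1⟩⟩

/-- let `L` be a locally finitely presentable category (cocomplete, with an
essentially small dense subcategory of compact objects) carrying a weak factorization
system `(E, F)` which is cofibrantly generated by a set of arrows between compact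
objects, and suppose the full subcategory of compact `E`-cofibrant objects (compact
objects `X` with `0 ⟶ X` in `E`) is dense in `L` (its restricted Yoneda / nerve functor
is fully faithful). Then every map in `F` is a regular epimorphism. -/
theorem full_maps_are_regular_epis
    {L : Type u} [Category.{v} L] [HasColimits L]
    -- local finite presentability: the compact objects are essentially small and dense
    [EssentiallySmall.{v} (ObjectProperty.FullSubcategory (CompactObj (C := L)))]
    (hlfp_dense : (Presheaf.restrictedYoneda
      (ObjectProperty.ι (CompactObj (C := L)))).Full ∧
      (Presheaf.restrictedYoneda
        (ObjectProperty.ι (CompactObj (C := L)))).Faithful)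
    -- the weak factorization system (E, F)
    (E F : MorphismProperty L)
    (hlift : ∀ {A B X Y : L} (e : A ⟶ B) (f : X ⟶ Y), E e → F f → HasLiftingProperty e f)
    (hE : ∀ {A B : L} (e : A ⟶ B),
      (∀ {X Y : L} (f : X ⟶ Y), F f → HasLiftingProperty e f) → E e)
    (hF : ∀ {X Y : L} (f : X ⟶ Y),
      (∀ {A B : L} (e : A ⟶ B), E e → HasLiftingProperty e f) → F f)
    (hfact : ∀ {X Y : L} (f : X ⟶ Y),
      ∃ (Z : L) (e : X ⟶ Z) (m : Z ⟶ Y), E e ∧ F m ∧ e ≫ m = f)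
    -- cofibrant generation by a set of arrows between compact objects
    (κ : Type v) (dom cod : κ → L) (gen : ∀ i, dom i ⟶ cod i)
    (hgen_compact : ∀ i, CompactObj (dom i) ∧ CompactObj (cod i))
    (hgen : ∀ {X Y : L} (f : X ⟶ Y), F f ↔ ∀ i, HasLiftingProperty (gen i) f)
    -- density of the compact E-cofibrant objects (0-extensions)
    (hdense : (Presheaf.restrictedYoneda (ObjectProperty.ι
        (fun X : L => CompactObj X ∧ E (initial.to X)))).Full ∧
      (Presheaf.restrictedYoneda (ObjectProperty.ι
        (fun X : L => CompactObj X ∧ E (initial.to X)))).Faithful) :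
    ∀ {X Y : L} (f : X ⟶ Y), F f → Nonempty (RegularEpi f) :=
  full_maps_are_regular_epis_general E F hlift hdense
end

section
/- Let 𝔏 be a locally finitely presentable category with weak factorization system (ℰ, ℱ), let f : A → B have a kernel pair p, q : R → A with p, q ∈ ℱ, and let e : A → C be the coequalizer of p and q. Assume the full subcategory of compact 0-extensions is dense in 𝔏 and that coequalizers of such equivalence relations are effective with full coequalizer map (so e ∈ ℱ and (p,q) is the kernel pair of e). Then the unique map m : C → B with m∘e = f is a monomorphism. -/
open CategoryTheory CategoryTheory.Limits Opposite

universe v u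

open CompactArrows

/-! Maps out of a 0-extension lift along the full map `e`. So if `g₁ ≫ m = g₂ ≫ m` for maps
`g₁ g₂` out of a compact 0-extension, their lifts `l₁ l₂` satisfy `l₁ ≫ f = l₂ ≫ f`, hence factor
through the kernel pair of `f`, which `e` coequalizes: `g₁ = l₁ ≫ e = l₂ ≫ e = g₂`. Density of the
compact 0-extensions then makes `m` a monomorphism. -/

section

variable {C : Type*} [Category C]

lemma exists_lift_of_hasLiftingProperty_initial_to [HasInitial C] {E₀ X Y : C} (g : X ⟶ Y)
    [HasLiftingProperty (initial.to E₀) g] (k : E₀ ⟶ Y) : ∃ l : E₀ ⟶ X, l ≫ g = k :=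
  ⟨(CommSq.mk (initial.hom_ext (initial.to X ≫ g) (initial.to E₀ ≫ k))).lift, CommSq.fac_right _⟩

lemma comp_eq_comp_of_kernelPair_comp_eq {A B Q T : C} {f : A ⟶ B} {e : A ⟶ Q} [HasPullback f f]
    (he : pullback.fst f f ≫ e = pullback.snd f f ≫ e) {l₁ l₂ : T ⟶ A} (h : l₁ ≫ f = l₂ ≫ f) :
    l₁ ≫ e = l₂ ≫ e := by
  simpa only [pullback.lift_fst_assoc, pullback.lift_snd_assoc] using pullback.lift l₁ l₂ h ≫= he

lemma mono_of_isSeparating_of_exists_lift {P : ObjectProperty C} (hP : P.IsSeparating)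
    {A B Q : C} {f : A ⟶ B} {e : A ⟶ Q} [HasPullback f f]
    (he : pullback.fst f f ≫ e = pullback.snd f f ≫ e)
    (hlift : ∀ G, P G → ∀ k : G ⟶ Q, ∃ l : G ⟶ A, l ≫ e = k) {m : Q ⟶ B} (hm : e ≫ m = f) :
    Mono m := by
  refine (hP.mono_iff m).2 fun G hG g₁ g₂ hg => ?_
  obtain ⟨l₁, rfl⟩ := hlift G hG g₁
  obtain ⟨l₂, rfl⟩ := hlift G hG g₂
  simp only [Category.assoc, hm] at hg
  exact comp_eq_comp_of_kernelPair_comp_eq he hg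

end

theorem comparison_map_is_mono_general
    {L : Type u} [Category.{v} L] [HasColimits L] [HasLimits L]
    (E F : MorphismProperty L)
    (hlift : ∀ {A B X Y : L} (e : A ⟶ B) (g : X ⟶ Y), E e → F g → HasLiftingProperty e g)
    -- density: maps out of compact 0-extensions jointly detect equality
    (hdense : ∀ {X Y : L} (u v : X ⟶ Y),
      (∀ (E₀ : L), CompactObj E₀ → E (initial.to E₀) →
        ∀ h : E₀ ⟶ X, h ≫ u = h ≫ v) → u = v)
    {A B : L} (f : A ⟶ B)
    -- the coequalizer of the kernel pair is full and effective
    (he : F (coequalizer.π (pullback.fst f f) (pullback.snd f f))) :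
    Mono (coequalizer.desc f pullback.condition) := by
  let P : ObjectProperty L := fun E₀ => CompactObj E₀ ∧ E (initial.to E₀)
  have hP : P.IsSeparating := fun _ _ u v h => hdense u v fun E₀ hc hE => h E₀ ⟨hc, hE⟩
  refine mono_of_isSeparating_of_exists_lift hP (coequalizer.condition _ _)
    (fun G ⟨_, hG⟩ k => ?_) (coequalizer.π_desc _ _)
  have := hlift _ _ hG he
  exact exists_lift_of_hasLiftingProperty_initial_to _ k

/-- let `L` be a locally finitely presentable category with a weak
factorization system `(E, F)`, let `f : A ⟶ B` have kernel pair `p, q : R ⟶ A` (the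
pullback of `f` against itself) with `p, q ∈ F`, and let `e : A ⟶ C` be the coequalizer
of `p, q`. Assume the compact 0-extensions are dense (they jointly detect equality of
parallel arrows), and that the coequalizer is effective with full coequalizer map, i.e.
`e ∈ F` and `(p, q)` is the kernel pair of `e`. Then the unique `m : C ⟶ B` with
`m ∘ e = f` is a monomorphism. -/
theorem comparison_map_is_mono
    {L : Type u} [Category.{v} L] [HasColimits L] [HasLimits L]
    [EssentiallySmall.{v} (ObjectProperty.FullSubcategory (CompactObj (C := L)))]
    (E F : MorphismProperty L)
    (hlift : ∀ {A B X Y : L} (e : A ⟶ B) (g : X ⟶ Y), E e → F g → HasLiftingProperty e g)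
    -- density: maps out of compact 0-extensions jointly detect equality
    (hdense : ∀ {X Y : L} (u v : X ⟶ Y),
      (∀ (E₀ : L), CompactObj E₀ → E (initial.to E₀) →
        ∀ h : E₀ ⟶ X, h ≫ u = h ≫ v) → u = v)
    {A B : L} (f : A ⟶ B)
    -- the kernel pair of f is componentwise full
    (hp : F (pullback.fst f f)) (hq : F (pullback.snd f f))
    -- the coequalizer of the kernel pair is full and effective
    (he : F (coequalizer.π (pullback.fst f f) (pullback.snd f f)))
    (heff : IsPullback (pullback.fst f f) (pullback.snd f f)
      (coequalizer.π (pullback.fst f f) (pullback.snd f f))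
      (coequalizer.π (pullback.fst f f) (pullback.snd f f))) :
    Mono (coequalizer.desc f pullback.condition) :=
  comparison_map_is_mono_general E F hlift hdense f he
end
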